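/- arXiv:1903.05489 — 7 statements merged into one kernel-verified Lean document; each statement's English description precedes it below -/
import Mathlib

section
/- Let K be a field and m a natural number. Let Q_red be an m×m matrix over K, T an invertible m×m matrix over K, and λ : Fin m → K a function with T⁻¹ * Q_red * T = diagonal(λ) and λ k ≠ 0 for every k. Let Y and F be 2×2 matrices over K with F invertible. Then the Kronecker products satisfy (T⁻¹ ⊗ I₂) * ((I_m ⊗ Y) * (Q_red ⊗ F)⁻¹) * (T ⊗ I₂) = diagonal(fun k => (λ k)⁻¹) ⊗ (Y * F⁻¹); that is, after the similarity transformation T ⊗ I₂, the open-loop transfer matrix of the m-converter system becomes block diagonal, its k-th 2×2 diagonal block being Y * (λ k • F)⁻¹ = (λ k)⁻¹ • (Y * F⁻¹). -/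
open Matrix Kronecker

/-- Proposition 1 (decoupling of the multi-converter system): after the similarity
transformation `T ⊗ I₂`, the open-loop transfer matrix
`(I_m ⊗ Y) * (Q_red ⊗ F)⁻¹` of the `m`-converter system becomes block diagonal,
with `k`-th `2×2` diagonal block `(λ k)⁻¹ • (Y * F⁻¹)`. -/
theorem decoupling_multi_converter {K : Type*} [Field K] {m : ℕ}
    (Qred T : Matrix (Fin m) (Fin m) K) (hT : IsUnit T.det)
    (lam : Fin m → K) (hdiag : T⁻¹ * Qred * T = Matrix.diagonal lam)
    (hlam : ∀ k, lam k ≠ 0)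
    (Y F : Matrix (Fin 2) (Fin 2) K) (hF : IsUnit F.det) :
    (T⁻¹ ⊗ₖ (1 : Matrix (Fin 2) (Fin 2) K)) *
        (((1 : Matrix (Fin m) (Fin m) K) ⊗ₖ Y) * (Qred ⊗ₖ F)⁻¹) *
        (T ⊗ₖ (1 : Matrix (Fin 2) (Fin 2) K)) =
      (Matrix.diagonal fun k => (lam k)⁻¹) ⊗ₖ (Y * F⁻¹) := by
  have key : T⁻¹ * Qred⁻¹ * T = Matrix.diagonal fun k => (lam k)⁻¹ := by
    have h1 : (T⁻¹ * Qred * T)⁻¹ = Matrix.diagonal fun k => (lam k)⁻¹ := by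
      rw [hdiag]
      exact Matrix.inv_eq_right_inv (by
        rw [Matrix.diagonal_mul_diagonal,
          funext (fun k => mul_inv_cancel₀ (hlam k) : ∀ k, lam k * (lam k)⁻¹ = 1),
          Matrix.diagonal_one])
    rw [Matrix.mul_inv_rev, Matrix.mul_inv_rev, Matrix.nonsing_inv_nonsing_inv _ hT,
      ← mul_assoc] at h1
    exact h1
  calc (T⁻¹ ⊗ₖ (1 : Matrix (Fin 2) (Fin 2) K)) *
        (((1 : Matrix (Fin m) (Fin m) K) ⊗ₖ Y) * (Qred ⊗ₖ F)⁻¹) *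
        (T ⊗ₖ (1 : Matrix (Fin 2) (Fin 2) K))
      = (T⁻¹ ⊗ₖ (1 : Matrix (Fin 2) (Fin 2) K)) *
        (((1 : Matrix (Fin m) (Fin m) K) ⊗ₖ Y) * (Qred⁻¹ ⊗ₖ F⁻¹)) *
        (T ⊗ₖ (1 : Matrix (Fin 2) (Fin 2) K)) := by
        rw [Matrix.inv_kronecker]
    _ = (T⁻¹ * Qred⁻¹ * T) ⊗ₖ (Y * F⁻¹) := by
        rw [← Matrix.mul_kronecker_mul, ← Matrix.mul_kronecker_mul,
          ← Matrix.mul_kronecker_mul]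
        congr 1 <;> simp [mul_assoc]
    _ = (Matrix.diagonal fun k => (lam k)⁻¹) ⊗ₖ (Y * F⁻¹) := by rw [key]
end

section
/- Let K be a field and m a natural number. Let Q_red be an m×m matrix over K, T an invertible m×m matrix over K, and λ : Fin m → K a function with T⁻¹ * Q_red * T = diagonal(λ) and λ k ≠ 0 for every k. Let Y and F be 2×2 matrices over K with F invertible. Then det(I_{2m} + (I_m ⊗ Y) * (Q_red ⊗ F)⁻¹) = ∏_{k} det(I₂ + (λ k)⁻¹ • (Y * F⁻¹)); that is, the closed-loop characteristic determinant of the m-converter system factors as the product of the closed-loop characteristic determinants of the m modal subsystems, the k-th of which has open-loop transfer matrix Y * (λ k • F)⁻¹. -/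
/-!
Since `(A ⊗ B)⁻¹ = A⁻¹ ⊗ B⁻¹`, the open-loop matrix is `(1 ⊗ Y) (Q_red⁻¹ ⊗ F⁻¹) = Q_red⁻¹ ⊗ (Y F⁻¹)`.
Conjugating by `T ⊗ 1` replaces `Q_red⁻¹` by `diag(λ)⁻¹ = diag(λ⁻¹)` without changing the
determinant, and after swapping the two factors of the index set `1 + diag(μ) ⊗ M` is block
diagonal with blocks `1 + μ k • M`.
-/

open Matrix Kronecker

namespace Matrix

variable {m n K R : Type*} [Fintype m] [DecidableEq m] [Fintype n] [DecidableEq n]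

theorem inv_diagonal_of_ne_zero [Field K] {v : m → K} (hv : ∀ i, v i ≠ 0) :
    (diagonal v)⁻¹ = diagonal v⁻¹ :=
  inv_eq_right_inv <| by
    rw [diagonal_mul_diagonal, ← diagonal_one]
    exact congrArg diagonal (funext fun i => mul_inv_cancel₀ (hv i))

variable [CommRing R]

theorem inv_conj_eq_conj_inv {T : Matrix m m R} (hT : IsUnit T.det) (A : Matrix m m R) :
    (T⁻¹ * A * T)⁻¹ = T⁻¹ * A⁻¹ * T := by
  rw [mul_inv_rev, mul_inv_rev, nonsing_inv_nonsing_inv _ hT, mul_assoc]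

theorem det_one_add_conj_kronecker {T : Matrix m m R} (hT : IsUnit T.det) (A : Matrix m m R)
    (M : Matrix n n R) : det (1 + (T⁻¹ * A * T) ⊗ₖ M) = det (1 + A ⊗ₖ M) := by
  have hTI : IsUnit (T ⊗ₖ (1 : Matrix n n R)) :=
    IsUnit.of_mul_eq_one (T⁻¹ ⊗ₖ 1) <| by
      rw [← mul_kronecker_mul, mul_nonsing_inv _ hT, one_mul, one_kronecker_one]
  calc det (1 + (T⁻¹ * A * T) ⊗ₖ M)
      = det ((T ⊗ₖ 1)⁻¹ * (1 + A ⊗ₖ M) * (T ⊗ₖ 1)) := by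
        rw [inv_kronecker, inv_one, mul_add, add_mul, mul_one, ← mul_kronecker_mul,
          ← mul_kronecker_mul, ← mul_kronecker_mul, nonsing_inv_mul _ hT, one_mul, one_mul,
          mul_one, one_kronecker_one]
    _ = det (1 + A ⊗ₖ M) := det_conj' hTI _

theorem det_one_add_diagonal_kronecker (μ : m → R) (M : Matrix n n R) :
    det (1 + diagonal μ ⊗ₖ M) = ∏ k, det (1 + μ k • M) := by
  have hblock : (1 : Matrix (m × n) (m × n) R) + diagonal μ ⊗ₖ M =
      reindex (.prodComm n m) (.prodComm n m) (blockDiagonal fun k => 1 + μ k • M) := by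
    rw [diagonal_kronecker, show (fun k => 1 + μ k • M) = 1 + fun k => μ k • M from rfl,
      blockDiagonal_add, blockDiagonal_one, ← coe_reindexAlgEquiv R R, map_add, map_one,
      coe_reindexAlgEquiv]
  rw [hblock, det_reindex_self, det_blockDiagonal]

end Matrix

theorem char_det_factorization_general {K : Type*} [Field K] {m : ℕ}
    (Qred T : Matrix (Fin m) (Fin m) K) (hT : IsUnit T.det)
    (lam : Fin m → K) (hdiag : T⁻¹ * Qred * T = Matrix.diagonal lam)
    (hlam : ∀ k, lam k ≠ 0)
    (Y F : Matrix (Fin 2) (Fin 2) K) :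
    ((1 : Matrix (Fin m × Fin 2) (Fin m × Fin 2) K) +
        ((1 : Matrix (Fin m) (Fin m) K) ⊗ₖ Y) * (Qred ⊗ₖ F)⁻¹).det =
      ∏ k : Fin m, ((1 : Matrix (Fin 2) (Fin 2) K) + (lam k)⁻¹ • (Y * F⁻¹)).det := by
  have hQinv : T⁻¹ * Qred⁻¹ * T = diagonal lam⁻¹ := by
    rw [← inv_conj_eq_conj_inv hT, hdiag, inv_diagonal_of_ne_zero hlam]
  rw [inv_kronecker, ← mul_kronecker_mul, one_mul, ← det_one_add_conj_kronecker hT, hQinv]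
  exact det_one_add_diagonal_kronecker _ _

/-- The closed-loop characteristic determinant of the `m`-converter system factors as the
product of the closed-loop characteristic determinants of the `m` modal subsystems, the
`k`-th of which has open-loop transfer matrix `Y * (λ k • F)⁻¹ = (λ k)⁻¹ • (Y * F⁻¹)`. -/
theorem char_det_factorization {K : Type*} [Field K] {m : ℕ}
    (Qred T : Matrix (Fin m) (Fin m) K) (hT : IsUnit T.det)
    (lam : Fin m → K) (hdiag : T⁻¹ * Qred * T = Matrix.diagonal lam)
    (hlam : ∀ k, lam k ≠ 0)
    (Y F : Matrix (Fin 2) (Fin 2) K) (hF : IsUnit F.det) :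
    ((1 : Matrix (Fin m × Fin 2) (Fin m × Fin 2) K) +
        ((1 : Matrix (Fin m) (Fin m) K) ⊗ₖ Y) * (Qred ⊗ₖ F)⁻¹).det =
      ∏ k : Fin m, ((1 : Matrix (Fin 2) (Fin 2) K) + (lam k)⁻¹ • (Y * F⁻¹)).det :=
  char_det_factorization_general Qred T hT lam hdiag hlam Y F
end

section
/- Let m, p be natural numbers, Q₁ a real m×m matrix, Q₂ a real m×p matrix, and Q₄ a real p×p matrix with Q₄ᵀ = Q₄ and Q₄ invertible. Let w ∈ ℝ^p and τ ∈ ℝ, and set c := w ⬝ᵥ (Q₄⁻¹ *ᵥ w). If 1 + τ·c ≠ 0, then the perturbed interior block Q₄ + τ • (w wᵀ) is invertible, and the Kron reduction of the perturbed network satisfies Q₁ - Q₂ * (Q₄ + τ • (w wᵀ))⁻¹ * Q₂ᵀ = Q_red + (τ / (1 + τ·c)) • ((Q_ac *ᵥ w) (Q_ac *ᵥ w)ᵀ), where Q_red = Q₁ - Q₂ * Q₄⁻¹ * Q₂ᵀ and Q_ac = -(Q₂ * Q₄⁻¹). -/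
/-!
The perturbed interior block is a rank-one update of `Q₄`, so the Sherman–Morrison formula
inverts it with a rank-one correction `Q₄⁻¹ w (Q₄⁻¹ w)ᵀ` (using `Q₄ᵀ = Q₄`); sandwiching that
correction between `Q₂` and `Q₂ᵀ` gives the outer product of `Q_ac w` with itself.
-/

open Matrix

namespace Matrix

section ShermanMorrison

variable {K n : Type*} [Field K] [Fintype n] [DecidableEq n]

lemma add_vecMulVec_mul_inv_sub_smul_vecMulVec {A : Matrix n n K} (hA : IsUnit A.det)
    (u v : n → K) (h : 1 + v ⬝ᵥ (A⁻¹ *ᵥ u) ≠ 0) :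
    (A + vecMulVec u v) *
        (A⁻¹ - (1 + v ⬝ᵥ (A⁻¹ *ᵥ u))⁻¹ • vecMulVec (A⁻¹ *ᵥ u) (v ᵥ* A⁻¹)) = 1 := by
  set r := 1 + v ⬝ᵥ (A⁻¹ *ᵥ u)
  have hcoef : 1 - r⁻¹ - (v ⬝ᵥ (A⁻¹ *ᵥ u)) * r⁻¹ = 0 := by
    field_simp
    ring
  rw [Matrix.add_mul, Matrix.mul_sub, Matrix.mul_sub, mul_nonsing_inv _ hA, Matrix.mul_smul,
    Matrix.mul_smul, mul_vecMulVec, mulVec_mulVec, mul_nonsing_inv _ hA, one_mulVec,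
    vecMulVec_mul, vecMulVec_mul_vecMulVec, vecMulVec_smul]
  calc 1 - r⁻¹ • vecMulVec u (v ᵥ* A⁻¹)
        + (vecMulVec u (v ᵥ* A⁻¹) - r⁻¹ • (v ⬝ᵥ (A⁻¹ *ᵥ u)) • vecMulVec u (v ᵥ* A⁻¹))
      = 1 + (1 - r⁻¹ - (v ⬝ᵥ (A⁻¹ *ᵥ u)) * r⁻¹) • vecMulVec u (v ᵥ* A⁻¹) := by module
    _ = 1 := by rw [hcoef, zero_smul, add_zero]

theorem isUnit_det_add_vecMulVec {A : Matrix n n K} (hA : IsUnit A.det) (u v : n → K)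
    (h : 1 + v ⬝ᵥ (A⁻¹ *ᵥ u) ≠ 0) : IsUnit (A + vecMulVec u v).det :=
  isUnit_det_of_right_inverse (add_vecMulVec_mul_inv_sub_smul_vecMulVec hA u v h)

/-- **Sherman–Morrison formula**. -/
theorem inv_add_vecMulVec {A : Matrix n n K} (hA : IsUnit A.det) (u v : n → K)
    (h : 1 + v ⬝ᵥ (A⁻¹ *ᵥ u) ≠ 0) :
    (A + vecMulVec u v)⁻¹ =
      A⁻¹ - (1 + v ⬝ᵥ (A⁻¹ *ᵥ u))⁻¹ • vecMulVec (A⁻¹ *ᵥ u) (v ᵥ* A⁻¹) :=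
  inv_eq_right_inv (add_vecMulVec_mul_inv_sub_smul_vecMulVec hA u v h)

lemma dotProduct_inv_mulVec_smul (A : Matrix n n K) (w : n → K) (τ : K) :
    w ⬝ᵥ (A⁻¹ *ᵥ (τ • w)) = τ * (w ⬝ᵥ (A⁻¹ *ᵥ w)) := by
  rw [mulVec_smul, dotProduct_smul, smul_eq_mul]

theorem isUnit_det_add_smul_vecMulVec_self {A : Matrix n n K} (hA : IsUnit A.det) (w : n → K)
    (τ : K) (h : 1 + τ * (w ⬝ᵥ (A⁻¹ *ᵥ w)) ≠ 0) : IsUnit (A + τ • vecMulVec w w).det := by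
  rw [← smul_vecMulVec]
  exact isUnit_det_add_vecMulVec hA _ _ (by rwa [dotProduct_inv_mulVec_smul])

theorem inv_add_smul_vecMulVec_self {A : Matrix n n K} (hAsymm : Aᵀ = A) (hA : IsUnit A.det)
    (w : n → K) (τ : K) (h : 1 + τ * (w ⬝ᵥ (A⁻¹ *ᵥ w)) ≠ 0) :
    (A + τ • vecMulVec w w)⁻¹ =
      A⁻¹ - (τ / (1 + τ * (w ⬝ᵥ (A⁻¹ *ᵥ w)))) • vecMulVec (A⁻¹ *ᵥ w) (A⁻¹ *ᵥ w) := by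
  have hvecMul : w ᵥ* A⁻¹ = A⁻¹ *ᵥ w := by
    rw [← mulVec_transpose, transpose_nonsing_inv, hAsymm]
  rw [← smul_vecMulVec, inv_add_vecMulVec hA _ _ (by rwa [dotProduct_inv_mulVec_smul]),
    dotProduct_inv_mulVec_smul, mulVec_smul, hvecMul, smul_vecMulVec, smul_smul, inv_mul_eq_div]

end ShermanMorrison

lemma mul_vecMulVec_mul_transpose {R l m n : Type*} [CommSemiring R] [Fintype n]
    (B : Matrix l n R) (x y : n → R) (C : Matrix m n R) :
    B * vecMulVec x y * Cᵀ = vecMulVec (B *ᵥ x) (C *ᵥ y) := by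
  rw [mul_vecMulVec, vecMulVec_mul, vecMul_transpose]

end Matrix

/-- Rank-one Kron-reduction update formula (used in the proof of Lemma 1): perturbing the
interior block `Q₄` by `τ • w wᵀ` yields (provided `1 + τ c ≠ 0`, where
`c = wᵀ Q₄⁻¹ w` is the interior effective resistance) an invertible interior block, and the
Kron reduction of the perturbed network equals
`Q_red + (τ / (1 + τ c)) • (Q_ac w)(Q_ac w)ᵀ`, with `Q_red = Q₁ - Q₂ Q₄⁻¹ Q₂ᵀ` and
`Q_ac = -Q₂ Q₄⁻¹`. -/
theorem kron_reduction_rank_one_update {m p : ℕ}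
    (Q1 : Matrix (Fin m) (Fin m) ℝ) (Q2 : Matrix (Fin m) (Fin p) ℝ)
    (Q4 : Matrix (Fin p) (Fin p) ℝ) (hQ4sym : Q4ᵀ = Q4) (hQ4 : IsUnit Q4.det)
    (w : Fin p → ℝ) (τ : ℝ)
    (h : 1 + τ * (w ⬝ᵥ (Q4⁻¹ *ᵥ w)) ≠ 0) :
    IsUnit (Q4 + τ • vecMulVec w w).det ∧
      Q1 - Q2 * (Q4 + τ • vecMulVec w w)⁻¹ * Q2ᵀ =
        (Q1 - Q2 * Q4⁻¹ * Q2ᵀ) +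
          (τ / (1 + τ * (w ⬝ᵥ (Q4⁻¹ *ᵥ w)))) •
            vecMulVec ((-(Q2 * Q4⁻¹)) *ᵥ w) ((-(Q2 * Q4⁻¹)) *ᵥ w) := by
  refine ⟨isUnit_det_add_smul_vecMulVec_self hQ4 w τ h, ?_⟩
  rw [inv_add_smul_vecMulVec_self hQ4sym hQ4 w τ h, Matrix.mul_sub, Matrix.sub_mul,
    Matrix.mul_smul, Matrix.smul_mul, mul_vecMulVec_mul_transpose, neg_mulVec, ← mulVec_mulVec,
    neg_vecMulVec, vecMulVec_neg, neg_neg]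
  abel
end

section
/- Let m, p be natural numbers, Q₁ a real m×m matrix, Q₂ a real m×p matrix, and Q₄ a real p×p matrix with Q₄ᵀ = Q₄ and Q₄ invertible, and let w ∈ ℝ^p. Then the matrix-valued function f(τ) := Q₁ - Q₂ * (Q₄ + τ • (w wᵀ))⁻¹ * Q₂ᵀ has derivative at τ = 0 equal to the rank-one matrix (Q_ac *ᵥ w) (Q_ac *ᵥ w)ᵀ, where Q_ac = -(Q₂ * Q₄⁻¹); i.e. HasDerivAt f ((Q_ac *ᵥ w)(Q_ac *ᵥ w)ᵀ) 0. -/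
open Matrix

attribute [local instance] Matrix.normedAddCommGroup Matrix.normedSpace

/-!
Along the ray `τ ↦ Q₄ + τ w wᵀ` the Sherman–Morrison formula writes the inverse as
`Q₄⁻¹ - τ / (1 + τ c) • Q₄⁻¹ w wᵀ Q₄⁻¹` with `c = wᵀ Q₄⁻¹ w`, valid near `τ = 0`. Hence the
Kron-reduced matrix is an affine function of the scalar `τ / (1 + τ c)`, whose derivative at `0`
is `1`; the direction `Q₂ Q₄⁻¹ w wᵀ Q₄⁻¹ Q₂ᵀ` equals `(Q_ac w)(Q_ac w)ᵀ` because `Q₄⁻¹` is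
symmetric.
-/

section ShermanMorrison

variable {K n : Type*} [Field K] [Fintype n] [DecidableEq n]

theorem Matrix.inv_add_smul_vecMulVec (A : Matrix n n K) (hA : IsUnit A.det) (u v : n → K)
    (τ : K) (h : 1 + τ * (v ⬝ᵥ A⁻¹ *ᵥ u) ≠ 0) :
    (A + τ • vecMulVec u v)⁻¹ =
      A⁻¹ - (τ / (1 + τ * (v ⬝ᵥ A⁻¹ *ᵥ u))) • vecMulVec (A⁻¹ *ᵥ u) (v ᵥ* A⁻¹) := by
  generalize hc : v ⬝ᵥ A⁻¹ *ᵥ u = c at h ⊢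
  set y := v ᵥ* A⁻¹
  set s := τ / (1 + τ * c)
  have h₁ : A * vecMulVec (A⁻¹ *ᵥ u) y = vecMulVec u y := by
    rw [mul_vecMulVec, mulVec_mulVec, mul_nonsing_inv A hA, one_mulVec]
  have h₂ : vecMulVec u v * vecMulVec (A⁻¹ *ᵥ u) y = c • vecMulVec u y := by
    rw [vecMulVec_mul_vecMulVec, hc, vecMulVec_smul]
  have h₃ : vecMulVec u v * A⁻¹ = vecMulVec u y := vecMulVec_mul u v A⁻¹
  have hcoeff : τ - s - τ * (s * c) = 0 := by
    simp only [s]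
    field_simp
    ring
  apply inv_eq_right_inv
  calc (A + τ • vecMulVec u v) * (A⁻¹ - s • vecMulVec (A⁻¹ *ᵥ u) y)
      = 1 + (τ - s - τ * (s * c)) • vecMulVec u y := by
        rw [add_mul, mul_sub, mul_sub, mul_nonsing_inv A hA, Matrix.mul_smul, Matrix.smul_mul,
          Matrix.smul_mul, Matrix.mul_smul, h₁, h₂, h₃]
        module
    _ = 1 := by rw [hcoeff, zero_smul, add_zero]

end ShermanMorrison

section Derivative

variable {𝕜 : Type*} [NontriviallyNormedField 𝕜]

theorem hasDerivAt_div_one_add_mul (c : 𝕜) : HasDerivAt (fun τ : 𝕜 => τ / (1 + τ * c)) 1 0 := by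
  have hden : HasDerivAt (fun τ : 𝕜 => 1 + τ * c) c 0 := by
    simpa using ((hasDerivAt_id' (0 : 𝕜)).mul_const c).const_add 1
  simpa using (hasDerivAt_id' (0 : 𝕜)).fun_div hden (by simp)

variable {l n r : Type*} [Fintype l] [Fintype n] [DecidableEq n] [Fintype r]

theorem hasDerivAt_sub_mul_inv_add_smul_vecMulVec_mul (B : Matrix l r 𝕜) (L : Matrix l n 𝕜)
    (A : Matrix n n 𝕜) (hA : IsUnit A.det) (R : Matrix n r 𝕜) (u v : n → 𝕜) :
    HasDerivAt (fun τ : 𝕜 => B - L * (A + τ • vecMulVec u v)⁻¹ * R)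
      (vecMulVec ((L * A⁻¹) *ᵥ u) (v ᵥ* (A⁻¹ * R))) 0 := by
  set c := v ⬝ᵥ A⁻¹ *ᵥ u with hc
  set M := vecMulVec ((L * A⁻¹) *ᵥ u) (v ᵥ* (A⁻¹ * R))
  have hM : L * vecMulVec (A⁻¹ *ᵥ u) (v ᵥ* A⁻¹) * R = M := by
    rw [mul_vecMulVec, vecMulVec_mul, mulVec_mulVec, vecMul_vecMul]
  have hnear : ∀ᶠ τ in nhds (0 : 𝕜), 1 + τ * c ≠ 0 :=
    (continuous_const.add (continuous_id.mul continuous_const)).continuousAt.eventually_ne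
      (by simp)
  have heq : (fun τ : 𝕜 => B - L * (A + τ • vecMulVec u v)⁻¹ * R)
      =ᶠ[nhds 0] fun τ => (B - L * A⁻¹ * R) + (τ / (1 + τ * c)) • M := by
    filter_upwards [hnear] with τ hτ
    rw [inv_add_smul_vecMulVec A hA u v τ hτ, ← hc, Matrix.mul_sub, Matrix.sub_mul, Matrix.mul_smul,
      Matrix.smul_mul, hM]
    abel
  have h := (((hasDerivAt_div_one_add_mul c).smul_const M).const_add
    (B - L * A⁻¹ * R)).congr_of_eventuallyEq heq
  rwa [one_smul] at h

end Derivative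

/-- Equations (19) and (20) of the paper: the Kron-reduced matrix
`f(τ) = Q₁ - Q₂ (Q₄ + τ w wᵀ)⁻¹ Q₂ᵀ` has derivative at `τ = 0` equal to the rank-one
matrix `(Q_ac w)(Q_ac w)ᵀ`, where `Q_ac = -Q₂ Q₄⁻¹`. -/
theorem kron_reduction_sensitivity {m p : ℕ}
    (Q1 : Matrix (Fin m) (Fin m) ℝ) (Q2 : Matrix (Fin m) (Fin p) ℝ)
    (Q4 : Matrix (Fin p) (Fin p) ℝ) (hQ4sym : Q4ᵀ = Q4) (hQ4 : IsUnit Q4.det)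
    (w : Fin p → ℝ) :
    HasDerivAt (fun τ : ℝ => Q1 - Q2 * (Q4 + τ • vecMulVec w w)⁻¹ * Q2ᵀ)
      (vecMulVec ((-(Q2 * Q4⁻¹)) *ᵥ w) ((-(Q2 * Q4⁻¹)) *ᵥ w)) 0 := by
  have hright : w ᵥ* (Q4⁻¹ * Q2ᵀ) = (Q2 * Q4⁻¹) *ᵥ w := by
    rw [← vecMul_transpose, transpose_mul, transpose_nonsing_inv, hQ4sym]
  have hdir : vecMulVec ((-(Q2 * Q4⁻¹)) *ᵥ w) ((-(Q2 * Q4⁻¹)) *ᵥ w) =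
      vecMulVec ((Q2 * Q4⁻¹) *ᵥ w) (w ᵥ* (Q4⁻¹ * Q2ᵀ)) := by
    rw [hright, neg_mulVec, neg_vecMulVec, vecMulVec_neg, neg_neg]
  rw [hdir]
  exact hasDerivAt_sub_mul_inv_add_smul_vecMulVec_mul Q1 Q2 Q4 hQ4 Q2ᵀ w w
end

section
/- Let m, p be natural numbers, Q₁ a real m×m matrix, Q₂ a real m×p matrix, and Q₄ a real p×p matrix with Q₄ invertible. Let i, j ∈ Fin m with i ≠ j and set W' := (e_i - e_j)(e_i - e_j)ᵀ ∈ ℝ^{m×m}. Then for every τ ∈ ℝ the Kron reduction of the perturbed block matrix [[Q₁ + τ • W', Q₂],[Q₂ᵀ, Q₄]] equals Q_red + τ • W', where Q_red = Q₁ - Q₂ Q₄⁻¹ Q₂ᵀ. Moreover, if λ : ℝ → ℝ and u : ℝ → ℝ^m are differentiable at 0 with (Q_red + τ • W') *ᵥ u(τ) = λ(τ) • u(τ) for all τ, and v ∈ ℝ^m satisfies vᵀ * Q_red = λ(0) • vᵀ and v ⬝ᵥ u(0) = 1, then λ'(0) = v ⬝ᵥ (W' *ᵥ u(0)) = (v i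 - v j) * (u(0) i - u(0) j). -/
/-!
Pairing the eigenvalue equation `(Q_red + τ W') u(τ) = λ(τ) u(τ)` with the left eigenvector `v`
of `Q_red` gives the scalar identity `(λ(τ) - λ(0)) (v ⬝ u(τ)) = τ (v ⬝ W' u(τ))`; differentiating
it at `τ = 0` and using `v ⬝ u(0) = 1` yields `λ'(0) = v ⬝ W' u(0)`, which for the rank-one `W'`
factors as `(v i - v j) (u(0) i - u(0) j)`. The Kron reduction commutes with the perturbation
because `W'` touches only the boundary block `Q₁`.
-/

open Matrix

variable {𝕜 n : Type*} [NontriviallyNormedField 𝕜] [Fintype n]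

theorem HasDerivAt.const_dotProduct {u : 𝕜 → n → 𝕜} {u' : n → 𝕜} {x : 𝕜}
    (hu : HasDerivAt u u' x) (w : n → 𝕜) :
    HasDerivAt (fun τ => w ⬝ᵥ u τ) (w ⬝ᵥ u') x :=
  HasDerivAt.fun_sum fun k _ => (hasDerivAt_pi.mp hu k).const_mul (w k)

theorem dotProduct_add_smul_mulVec_of_vecMul_eq {A W : Matrix n n 𝕜} {v x : n → 𝕜} {μ : 𝕜}
    (hv : v ᵥ* A = μ • v) (τ : 𝕜) :
    v ⬝ᵥ ((A + τ • W) *ᵥ x) = μ * (v ⬝ᵥ x) + τ * (v ⬝ᵥ (W *ᵥ x)) := by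
  rw [add_mulVec, dotProduct_add, dotProduct_mulVec, hv, smul_dotProduct, smul_mulVec,
    dotProduct_smul, smul_eq_mul, smul_eq_mul]

theorem hasDerivAt_eigenvalue_of_add_smul {A W : Matrix n n 𝕜} {lam : 𝕜 → 𝕜} {u : 𝕜 → n → 𝕜}
    {v : n → 𝕜} (hlam : DifferentiableAt 𝕜 lam 0) (hu : DifferentiableAt 𝕜 u 0)
    (heig : ∀ τ, (A + τ • W) *ᵥ u τ = lam τ • u τ) (hv : v ᵥ* A = lam 0 • v)
    (hnorm : v ⬝ᵥ u 0 = 1) :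
    HasDerivAt lam (v ⬝ᵥ (W *ᵥ u 0)) 0 := by
  have hvu := hu.hasDerivAt.const_dotProduct v
  have hvWu : HasDerivAt (fun τ => v ⬝ᵥ (W *ᵥ u τ)) (v ⬝ᵥ (W *ᵥ deriv u 0)) 0 := by
    simpa only [dotProduct_mulVec] using hu.hasDerivAt.const_dotProduct (v ᵥ* W)
  have paired : (fun τ => lam τ * (v ⬝ᵥ u τ)) =
      fun τ => lam 0 * (v ⬝ᵥ u τ) + τ * (v ⬝ᵥ (W *ᵥ u τ)) := by
    ext τ
    rw [← dotProduct_add_smul_mulVec_of_vecMul_eq hv, heig, dotProduct_smul, smul_eq_mul]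
  have lhs := hlam.hasDerivAt.fun_mul hvu
  have rhs := (hvu.const_mul (lam 0)).fun_add ((hasDerivAt_id' 0).fun_mul hvWu)
  rw [paired] at lhs
  have derivs_eq := lhs.unique rhs
  simp only [hnorm, mul_one, one_mul, zero_mul, add_zero] at derivs_eq
  rw [add_comm, add_right_inj] at derivs_eq
  exact derivs_eq ▸ hlam.hasDerivAt

theorem dotProduct_vecMulVec_mulVec {R : Type*} [CommSemiring R] (v a b x : n → R) :
    v ⬝ᵥ (vecMulVec a b *ᵥ x) = (v ⬝ᵥ a) * (b ⬝ᵥ x) := by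
  rw [vecMulVec_mulVec, op_smul_eq_smul, dotProduct_smul, smul_eq_mul, mul_comm]

theorem lemma2_converter_nodes_sensitivity_general {m p : ℕ}
    (Q1 : Matrix (Fin m) (Fin m) ℝ) (Q2 : Matrix (Fin m) (Fin p) ℝ)
    (Q4 : Matrix (Fin p) (Fin p) ℝ)
    (i j : Fin m)
    (W' : Matrix (Fin m) (Fin m) ℝ)
    (hW' : W' = vecMulVec (Pi.single i 1 - Pi.single j 1) (Pi.single i 1 - Pi.single j 1))
    (Qred : Matrix (Fin m) (Fin m) ℝ) (hQred : Qred = Q1 - Q2 * Q4⁻¹ * Q2ᵀ)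
    (lam : ℝ → ℝ) (u : ℝ → (Fin m → ℝ))
    (hlam : DifferentiableAt ℝ lam 0) (hu : DifferentiableAt ℝ u 0)
    (heig : ∀ τ : ℝ, (Qred + τ • W') *ᵥ u τ = lam τ • u τ)
    (v : Fin m → ℝ)
    (hv : v ᵥ* Qred = lam 0 • v)
    (hnorm : v ⬝ᵥ u 0 = 1) :
    (∀ τ : ℝ, (Q1 + τ • W') - Q2 * Q4⁻¹ * Q2ᵀ = Qred + τ • W') ∧
      deriv lam 0 = v ⬝ᵥ (W' *ᵥ u 0) ∧
      deriv lam 0 = (v i - v j) * (u 0 i - u 0 j) := by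
  have hderiv := (hasDerivAt_eigenvalue_of_add_smul hlam hu heig hv hnorm).deriv
  refine ⟨fun τ => by rw [hQred, add_sub_right_comm], hderiv, ?_⟩
  rw [hderiv, hW', dotProduct_vecMulVec_mulVec]
  simp only [dotProduct_sub, sub_dotProduct, dotProduct_single_one, single_one_dotProduct]

/-- Lemma 2 of the paper (susceptance perturbation `B_ij` between two converter nodes `i`
and `j`): the Kron reduction of the perturbed block matrix
`[[Q₁ + τ W', Q₂],[Q₂ᵀ, Q₄]]` equals `Q_red + τ W'` for `W' = (e_i-e_j)(e_i-e_j)ᵀ`, and the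
eigenvalue sensitivity is `λ'(0) = vᵀ W' u(0) = (v i - v j)(u(0) i - u(0) j)`. -/
theorem lemma2_converter_nodes_sensitivity {m p : ℕ}
    (Q1 : Matrix (Fin m) (Fin m) ℝ) (Q2 : Matrix (Fin m) (Fin p) ℝ)
    (Q4 : Matrix (Fin p) (Fin p) ℝ) (hQ4 : IsUnit Q4.det)
    (i j : Fin m) (hij : i ≠ j)
    (W' : Matrix (Fin m) (Fin m) ℝ)
    (hW' : W' = vecMulVec (Pi.single i 1 - Pi.single j 1) (Pi.single i 1 - Pi.single j 1))
    (Qred : Matrix (Fin m) (Fin m) ℝ) (hQred : Qred = Q1 - Q2 * Q4⁻¹ * Q2ᵀ)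
    (lam : ℝ → ℝ) (u : ℝ → (Fin m → ℝ))
    (hlam : DifferentiableAt ℝ lam 0) (hu : DifferentiableAt ℝ u 0)
    (heig : ∀ τ : ℝ, (Qred + τ • W') *ᵥ u τ = lam τ • u τ)
    (v : Fin m → ℝ)
    (hv : v ᵥ* Qred = lam 0 • v)
    (hnorm : v ⬝ᵥ u 0 = 1) :
    (∀ τ : ℝ, (Q1 + τ • W') - Q2 * Q4⁻¹ * Q2ᵀ = Qred + τ • W') ∧
      deriv lam 0 = v ⬝ᵥ (W' *ᵥ u 0) ∧
      deriv lam 0 = (v i - v j) * (u 0 i - u 0 j) :=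
  lemma2_converter_nodes_sensitivity_general Q1 Q2 Q4 i j W' hW' Qred hQred lam u hlam hu heig v hv
    hnorm
end

section
/- Let m, p be natural numbers, Q₁ a real m×m matrix, Q₂ a real m×p matrix, and Q₄ a real p×p matrix with Q₄ invertible. Let i ∈ Fin m and set W' := e_i e_iᵀ ∈ ℝ^{m×m}. Then for every τ ∈ ℝ the Kron reduction of the perturbed block matrix [[Q₁ + τ • W', Q₂],[Q₂ᵀ, Q₄]] equals Q_red + τ • W', where Q_red = Q₁ - Q₂ Q₄⁻¹ Q₂ᵀ. Moreover, if λ : ℝ → ℝ and u : ℝ → ℝ^m are differentiable at 0 with (Q_red + τ • W') *ᵥ u(τ) = λ(τ) • u(τ) for all τ, and v ∈ ℝ^m satisfies vᵀ * Q_red = λ(0) • vᵀ and v ⬝ᵥ u(0) = 1, then λ'(0) = v ⬝ᵥ (W' *ᵥ u(0)) = v i * u(0) i. -/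
open Matrix

/-- Lemma 2 of the paper (perturbation of the self-loop of converter node `i`, i.e. the
susceptance between converter node `i` and the infinite bus, `W' = e_i e_iᵀ`): the Kron
reduction of the perturbed block matrix equals `Q_red + τ W'`, and the eigenvalue
sensitivity is `λ'(0) = vᵀ W' u(0) = v i · u(0) i` (the participation factor `p_{1i}`). -/
theorem lemma2_selfloop_sensitivity {m p : ℕ}
    (Q1 : Matrix (Fin m) (Fin m) ℝ) (Q2 : Matrix (Fin m) (Fin p) ℝ)
    (Q4 : Matrix (Fin p) (Fin p) ℝ) (hQ4 : IsUnit Q4.det)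
    (i : Fin m)
    (W' : Matrix (Fin m) (Fin m) ℝ)
    (hW' : W' = vecMulVec (Pi.single i 1) (Pi.single i 1))
    (Qred : Matrix (Fin m) (Fin m) ℝ) (hQred : Qred = Q1 - Q2 * Q4⁻¹ * Q2ᵀ)
    (lam : ℝ → ℝ) (u : ℝ → (Fin m → ℝ))
    (hlam : DifferentiableAt ℝ lam 0) (hu : DifferentiableAt ℝ u 0)
    (heig : ∀ τ : ℝ, (Qred + τ • W') *ᵥ u τ = lam τ • u τ)
    (v : Fin m → ℝ)
    (hv : v ᵥ* Qred = lam 0 • v)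
    (hnorm : v ⬝ᵥ u 0 = 1) :
    (∀ τ : ℝ, (Q1 + τ • W') - Q2 * Q4⁻¹ * Q2ᵀ = Qred + τ • W') ∧
      deriv lam 0 = v ⬝ᵥ (W' *ᵥ u 0) ∧
      deriv lam 0 = v i * u 0 i := by
  have key : deriv lam 0 = v ⬝ᵥ (W' *ᵥ u 0) := by
    have hcomp : ∀ j : Fin m, DifferentiableAt ℝ (fun τ => u τ j) 0 := by
      intro j
      exact ((ContinuousLinearMap.proj j : (Fin m → ℝ) →L[ℝ] ℝ).differentiableAt).comp 0 hu
    have hf : DifferentiableAt ℝ (fun τ => v ⬝ᵥ u τ) 0 := by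
      simp only [dotProduct]
      exact DifferentiableAt.fun_sum fun j _ => (hcomp j).const_mul (v j)
    have hc : DifferentiableAt ℝ (fun τ => (v ᵥ* W') ⬝ᵥ u τ) 0 := by
      simp only [dotProduct]
      exact DifferentiableAt.fun_sum fun j _ => (hcomp j).const_mul _
    have hFG : (fun τ => (lam τ - lam 0) * (v ⬝ᵥ u τ)) =
        fun τ => τ * ((v ᵥ* W') ⬝ᵥ u τ) := by
      funext τ
      have h1 : lam τ * (v ⬝ᵥ u τ) = v ⬝ᵥ ((Qred + τ • W') *ᵥ u τ) := by
        rw [heig τ, dotProduct_smul, smul_eq_mul]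
      have h2 : v ⬝ᵥ ((Qred + τ • W') *ᵥ u τ) =
          lam 0 * (v ⬝ᵥ u τ) + τ * ((v ᵥ* W') ⬝ᵥ u τ) := by
        rw [dotProduct_mulVec, vecMul_add, add_dotProduct, hv, smul_dotProduct,
          smul_eq_mul]
        have h3 : v ᵥ* (τ • W') = τ • (v ᵥ* W') := by
          ext j
          simp [vecMul, dotProduct, Finset.mul_sum, mul_comm, mul_left_comm]
        rw [h3, smul_dotProduct, smul_eq_mul]
      rw [sub_mul, h1, h2]
      ring
    have hF : HasDerivAt (fun τ => (lam τ - lam 0) * (v ⬝ᵥ u τ))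
        (deriv lam 0 * (v ⬝ᵥ u 0) + (lam 0 - lam 0) * deriv (fun τ => v ⬝ᵥ u τ) 0) 0 :=
      ((hlam.hasDerivAt.sub_const (lam 0)).mul hf.hasDerivAt)
    have hG : HasDerivAt (fun τ => τ * ((v ᵥ* W') ⬝ᵥ u τ))
        (1 * ((v ᵥ* W') ⬝ᵥ u 0) + 0 * deriv (fun τ => (v ᵥ* W') ⬝ᵥ u τ) 0) 0 :=
      (hasDerivAt_id 0).mul hc.hasDerivAt
    rw [hFG] at hF
    have := hF.unique hG
    rw [hnorm] at this
    simp only [mul_one, sub_self, zero_mul, add_zero, one_mul] at this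
    rw [this, dotProduct_mulVec]
  refine ⟨fun τ => by rw [hQred]; abel, key, ?_⟩
  rw [key, hW']
  simp [vecMulVec, mulVec, dotProduct, Pi.single_apply, Finset.mul_sum,
    mul_ite, ite_mul, Finset.sum_ite_eq, Finset.sum_ite_eq']
end

section
/- Let m, p be natural numbers, Q₁ a real m×m matrix with Q₁ᵀ = Q₁, Q₂ a real m×p matrix, and Q₄ a real p×p matrix with Q₄ invertible. Let i, j ∈ Fin m and set W' := (e_i - e_j)(e_i - e_j)ᵀ. Suppose λ : ℝ → ℝ and u : ℝ → ℝ^m are differentiable at 0, (Q_red + τ • W') *ᵥ u(τ) = λ(τ) • u(τ) for all τ, where Q_red = Q₁ - Q₂ Q₄⁻¹ Q₂ᵀ is assumed symmetric (Q_redᵀ = Q_red), and u(0) ⬝ᵥ u(0) = 1. Then λ'(0) = (u(0) i - u(0) j)²; in particular λ'(0) ≥ 0, i.e. adding a new line between two converter nodes can never decrease an eigenvalue of the Kron-reduced grounded Laplacian. -/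
open Matrix

theorem HasDerivAt.const_dotProduct_s10 {𝕜 ι : Type*} [NontriviallyNormedField 𝕜] [Fintype ι]
    {u : 𝕜 → ι → 𝕜} {u' : ι → 𝕜} {t : 𝕜} (c : ι → 𝕜) (hu : HasDerivAt u u' t) :
    HasDerivAt (fun τ => c ⬝ᵥ u τ) (c ⬝ᵥ u') t :=
  HasDerivAt.fun_sum fun k _ => (hasDerivAt_pi.mp hu k).const_mul (c k)

theorem dotProduct_vecMulVec_self_mulVec {R ι : Type*} [CommSemiring R] [Fintype ι]
    (w u : ι → R) : u ⬝ᵥ (vecMulVec w w *ᵥ u) = (w ⬝ᵥ u) ^ 2 := by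
  rw [dotProduct_mulVec, vecMul_vecMulVec, smul_dotProduct, smul_eq_mul, dotProduct_comm, sq]

/-- Hellmann–Feynman: differentiate `λ τ (u 0 ⬝ u τ) = u 0 ⬝ (A + τ B) u τ`; by symmetry of `A`
the terms containing `u'(0)` cancel. -/
theorem deriv_eigenvalue_add_smul {ι : Type*} [Fintype ι] {A B : Matrix ι ι ℝ} (hA : Aᵀ = A)
    {lam : ℝ → ℝ} {u : ℝ → ι → ℝ} (hlam : DifferentiableAt ℝ lam 0)
    (hu : DifferentiableAt ℝ u 0) (heig : ∀ τ : ℝ, (A + τ • B) *ᵥ u τ = lam τ • u τ)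
    (hnorm : u 0 ⬝ᵥ u 0 = 1) :
    deriv lam 0 = u 0 ⬝ᵥ (B *ᵥ u 0) := by
  have hu' := hu.hasDerivAt
  have hA_left : u 0 ᵥ* A = lam 0 • u 0 := by
    rw [← hA, vecMul_transpose]
    simpa using heig 0
  have hpair : (fun τ => lam 0 * (u 0 ⬝ᵥ u τ) + τ * ((u 0 ᵥ* B) ⬝ᵥ u τ))
      = fun τ => lam τ * (u 0 ⬝ᵥ u τ) := by
    funext τ
    have h := congrArg (u 0 ⬝ᵥ ·) (heig τ)
    simp only [add_mulVec, smul_mulVec, dotProduct_add, dotProduct_smul, dotProduct_mulVec,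
      hA_left, smul_dotProduct, smul_eq_mul] at h
    exact h
  have hL := ((hu'.const_dotProduct_s10 (u 0)).const_mul (lam 0)).fun_add
    ((hasDerivAt_id' (0 : ℝ)).fun_mul (hu'.const_dotProduct_s10 (u 0 ᵥ* B)))
  have hR := hlam.hasDerivAt.fun_mul (hu'.const_dotProduct_s10 (u 0))
  have h := hL.unique (hpair ▸ hR)
  simp only [one_mul, zero_mul, add_zero, ← dotProduct_mulVec, hnorm] at h
  linarith

theorem converter_sensitivity_nonneg_general {m : ℕ}
    (i j : Fin m)
    (W' : Matrix (Fin m) (Fin m) ℝ)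
    (hW' : W' = vecMulVec (Pi.single i 1 - Pi.single j 1) (Pi.single i 1 - Pi.single j 1))
    (Qred : Matrix (Fin m) (Fin m) ℝ)
    (hQredsym : Qredᵀ = Qred)
    (lam : ℝ → ℝ) (u : ℝ → (Fin m → ℝ))
    (hlam : DifferentiableAt ℝ lam 0) (hu : DifferentiableAt ℝ u 0)
    (heig : ∀ τ : ℝ, (Qred + τ • W') *ᵥ u τ = lam τ • u τ)
    (hnorm : u 0 ⬝ᵥ u 0 = 1) :
    deriv lam 0 = (u 0 i - u 0 j) ^ 2 ∧ 0 ≤ deriv lam 0 := by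
  have hderiv : deriv lam 0 = (u 0 i - u 0 j) ^ 2 := by
    rw [deriv_eigenvalue_add_smul hQredsym hlam hu heig hnorm, hW',
      dotProduct_vecMulVec_self_mulVec]
    simp [sub_dotProduct, single_dotProduct]
  exact ⟨hderiv, hderiv ▸ sq_nonneg _⟩

/-- Section IV-C of the paper: the sensitivity of an eigenvalue of the (symmetric)
Kron-reduced grounded Laplacian to a susceptance perturbation between two converter nodes
`i` and `j` (i.e. `W' = (e_i - e_j)(e_i - e_j)ᵀ`) equals `(u(0) i - u(0) j)² ≥ 0`;
adding a new line between two converter nodes can never decrease an eigenvalue of the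
Kron-reduced grounded Laplacian. -/
theorem converter_sensitivity_nonneg {m p : ℕ}
    (Q1 : Matrix (Fin m) (Fin m) ℝ) (hQ1sym : Q1ᵀ = Q1)
    (Q2 : Matrix (Fin m) (Fin p) ℝ)
    (Q4 : Matrix (Fin p) (Fin p) ℝ) (hQ4 : IsUnit Q4.det)
    (i j : Fin m)
    (W' : Matrix (Fin m) (Fin m) ℝ)
    (hW' : W' = vecMulVec (Pi.single i 1 - Pi.single j 1) (Pi.single i 1 - Pi.single j 1))
    (Qred : Matrix (Fin m) (Fin m) ℝ) (hQred : Qred = Q1 - Q2 * Q4⁻¹ * Q2ᵀ)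
    (hQredsym : Qredᵀ = Qred)
    (lam : ℝ → ℝ) (u : ℝ → (Fin m → ℝ))
    (hlam : DifferentiableAt ℝ lam 0) (hu : DifferentiableAt ℝ u 0)
    (heig : ∀ τ : ℝ, (Qred + τ • W') *ᵥ u τ = lam τ • u τ)
    (hnorm : u 0 ⬝ᵥ u 0 = 1) :
    deriv lam 0 = (u 0 i - u 0 j) ^ 2 ∧ 0 ≤ deriv lam 0 :=
  converter_sensitivity_nonneg_general i j W' hW' Qred hQredsym lam u hlam hu heig hnorm
end
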